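/- arXiv:2405.13252 — 4 statements merged into one kernel-verified Lean document; each statement's English description precedes it below -/
import Mathlib

section
/- The path P_n on n vertices has edge irregularity strength es(P_n) = ⌈n/2⌉ for n ≥ 2. -/
/-- A vertex `k`-labeling `φ : V → {1,…,k}` of `G` is *edge irregular* if the
weights `φ x + φ y` of distinct edges are distinct. -/
def IsEdgeIrregular {V : Type*} (G : SimpleGraph V) (k : ℕ) (φ : V → ℕ) : Prop :=
  (∀ v, 1 ≤ φ v ∧ φ v ≤ k) ∧
  ∀ u v x y, G.Adj u v → G.Adj x y → s(u, v) ≠ s(x, y) → φ u + φ v ≠ φ x + φ y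

/-- The edge irregularity strength `es G`. -/
noncomputable def es {V : Type*} (G : SimpleGraph V) : ℕ :=
  sInf {k | ∃ φ : V → ℕ, IsEdgeIrregular G k φ}

/-- The Dandelion graph `D(n,l)` on `Fin n`: path vertices `p_j` are `0,…,l-1`,
leaves `x_1,…,x_{n-l}` are `l,…,n-1`, each leaf adjacent to the center `0`. -/
def Dandelion (n l : ℕ) : SimpleGraph (Fin n) :=
  SimpleGraph.fromRel (fun a b =>
    (a.val = 0 ∧ l ≤ b.val) ∨ (a.val + 1 = b.val ∧ b.val ≤ l - 1))

instance (n l : ℕ) : DecidableRel (Dandelion n l).Adj := fun a b =>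
  decidable_of_iff _ (SimpleGraph.fromRel_adj _ a b).symm

/-!
The weights of an edge irregular `k`-labeling are distinct numbers in `[2, 2k]`, so a graph with
`m` edges needs `m ≤ 2k - 1`; for `P_n` this gives `k ≥ ⌈n/2⌉`. Conversely, labeling `v_i` by
`⌊i/2⌋ + 1` (counting from `0`) gives the edge `v_i v_{i+1}` the weight `i + 2`.
-/

open SimpleGraph

section EdgeIrregular

variable {V : Type*} {G : SimpleGraph V} {k : ℕ} {φ : V → ℕ}

lemma es_le (h : IsEdgeIrregular G k φ) : es G ≤ k :=
  Nat.sInf_le ⟨φ, h⟩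

def edgeWeight (φ : V → ℕ) : Sym2 V → ℕ :=
  Sym2.lift ⟨fun x y => φ x + φ y, fun _ _ => add_comm _ _⟩

lemma IsEdgeIrregular.injOn_edgeWeight (h : IsEdgeIrregular G k φ) :
    Set.InjOn (edgeWeight φ) G.edgeSet := by
  intro e₁ he₁ e₂ he₂ hw
  induction e₁ using Sym2.ind
  induction e₂ using Sym2.ind
  by_contra hne
  exact h.2 _ _ _ _ he₁ he₂ hne hw

lemma IsEdgeIrregular.edgeWeight_mem_Icc (h : IsEdgeIrregular G k φ) (e : Sym2 V) :
    edgeWeight φ e ∈ Set.Icc 2 (2 * k) := by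
  induction e using Sym2.ind with
  | _ x y =>
    have hx := h.1 x
    have hy := h.1 y
    simp only [edgeWeight, Sym2.lift_mk, Set.mem_Icc]
    omega

lemma IsEdgeIrregular.ncard_edgeSet_le_two_mul_sub_one (h : IsEdgeIrregular G k φ) :
    G.edgeSet.ncard ≤ 2 * k - 1 := by
  calc G.edgeSet.ncard ≤ (Set.Icc 2 (2 * k)).ncard :=
        Set.ncard_le_ncard_of_injOn _ (fun e _ => h.edgeWeight_mem_Icc e) h.injOn_edgeWeight
    _ = 2 * k - 1 := by rw [Set.ncard_Icc_nat]; omega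

lemma IsEdgeIrregular.ncard_edgeSet_le_two_mul_es_sub_one (h : IsEdgeIrregular G k φ) :
    G.edgeSet.ncard ≤ 2 * es G - 1 := by
  obtain ⟨ψ, hψ⟩ := Nat.sInf_mem (s := {k | ∃ φ : V → ℕ, IsEdgeIrregular G k φ}) ⟨k, φ, h⟩
  exact hψ.ncard_edgeSet_le_two_mul_sub_one

end EdgeIrregular

lemma SimpleGraph.ncard_edgeSet_pathGraph (n : ℕ) : (pathGraph n).edgeSet.ncard = n - 1 := by
  refine Set.ncard_eq_of_bijective (fun i hi => s(⟨i, by omega⟩, ⟨i + 1, by omega⟩))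
    ?_ (fun i hi => by simp [pathGraph_adj]) ?_
  · intro e he
    induction e using Sym2.ind with
    | _ u v =>
      rw [mem_edgeSet, pathGraph_adj] at he
      rcases he with huv | hvu
      · exact ⟨u, by omega, by simp [huv]⟩
      · exact ⟨v, by omega, by simp [hvu]⟩
  · intro i j _ _ hij
    simp only [Sym2.eq_iff, Fin.mk.injEq] at hij
    omega

lemma isEdgeIrregular_pathGraph (n : ℕ) :
    IsEdgeIrregular (pathGraph n) ((n + 1) / 2) (fun v => v / 2 + 1) := by
  refine ⟨fun v => by dsimp only; omega, fun u v x y huv hxy hne => ?_⟩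
  rw [pathGraph_adj] at huv hxy
  rw [Ne, Sym2.eq_iff] at hne
  simp only [Fin.ext_iff] at hne
  dsimp only
  omega

/-- The path `P_n` on `n` vertices has edge irregularity strength `⌈n/2⌉` for `n ≥ 2`. -/
theorem stmt_2 (n : ℕ) (hn : 2 ≤ n) :
    es (SimpleGraph.pathGraph n) = (n + 1) / 2 := by
  have hφ := isEdgeIrregular_pathGraph n
  have hcard := hφ.ncard_edgeSet_le_two_mul_es_sub_one
  rw [ncard_edgeSet_pathGraph] at hcard
  have hle := es_le hφ
  omega
end

section
/- Let G = D(n,l) be the Dandelion graph with n > l ≥ 2. If n - l + 1 ≥ ⌈n/2⌉ (equivalently Δ(G) ≥ ⌈(|E(G)|+1)/2⌉), then es(G) = n - l + 1. -/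
/-- canonical form of an edge of the dandelion graph -/
lemma dand_adj {n l : ℕ} {a b : Fin n} (h : (Dandelion n l).Adj a b) :
    ∃ p q : Fin n, s(a,b) = s(p,q) ∧
      ((p.val = 0 ∧ l ≤ q.val) ∨ (p.val + 1 = q.val ∧ q.val + 1 ≤ l)) := by
  rw [Dandelion, SimpleGraph.fromRel_adj] at h
  obtain ⟨hne, h | h⟩ := h
  · exact ⟨a, b, rfl, by omega⟩
  · exact ⟨b, a, Sym2.eq_swap, by omega⟩

/-- the labeling -/
def dlab (n l : ℕ) (v : Fin n) : ℕ :=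
  if v.val = 0 then 1 else if v.val < l then (n - l + 1) - (v.val - 1)/2 else v.val - l + 1

lemma dand_adj_center {n l : ℕ} (hl : 2 ≤ l) (z w : Fin n) (hz : z.val = 0)
    (hw : w.val = 1 ∨ l ≤ w.val) : (Dandelion n l).Adj z w := by
  rw [Dandelion, SimpleGraph.fromRel_adj]
  exact ⟨Fin.ne_of_val_ne (by omega), Or.inl (by omega)⟩

lemma dand_sum_eq {n l : ℕ} {a b p q : Fin n} (hpq : s(a,b) = s(p,q)) :
    dlab n l a + dlab n l b = dlab n l p + dlab n l q := by
  rcases Sym2.eq_iff.1 hpq with ⟨rfl, rfl⟩ | ⟨rfl, rfl⟩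
  · rfl
  · exact Nat.add_comm _ _

set_option maxHeartbeats 1000000 in
/-- If `Δ(D(n,l)) = n-l+1 ≥ ⌈n/2⌉ = ⌈(|E|+1)/2⌉`, then `es(D(n,l)) = n-l+1`. -/
theorem stmt_5 (n l : ℕ) (hl : 2 ≤ l) (hn : l < n) (h : n - l + 1 ≥ (n + 1) / 2) :
    es (Dandelion n l) = n - l + 1 := by
  have hn2 : 2 * l ≤ n + 2 := by omega
  clear h
  set S : Set ℕ := {k | ∃ φ : Fin n → ℕ, IsEdgeIrregular (Dandelion n l) k φ} with hS
  -- upper bound : the labeling dlab works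
  have hmem : (n - l + 1) ∈ S := by
    refine ⟨dlab n l, ?_, ?_⟩
    · intro v
      have hv := v.isLt
      simp only [dlab]
      split_ifs <;> omega
    · intro u v x y huv hxy hne hsum
      obtain ⟨p, q, he1, hc1⟩ := dand_adj huv
      obtain ⟨r, t, he2, hc2⟩ := dand_adj hxy
      have hsum' : dlab n l p + dlab n l q = dlab n l r + dlab n l t :=
        (dand_sum_eq he1).symm.trans (hsum.trans (dand_sum_eq he2))
      have hq := q.isLt
      have ht := t.isLt
      clear hsum huv hxy
      have hvals : p.val = r.val ∧ q.val = t.val := by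
        clear hne he1 he2
        simp only [dlab] at hsum'
        split_ifs at hsum' <;> omega
      apply hne
      rw [he1, he2, Fin.ext hvals.1, Fin.ext hvals.2]
  -- lower bound
  have hlow : ∀ m ∈ S, n - l + 1 ≤ m := by
    rintro m ⟨φ, hb, hi⟩
    set c : Fin n := ⟨0, by omega⟩ with hc
    set g : Fin (n - l + 1) → Fin n :=
      fun i => if i.val = 0 then ⟨1, by omega⟩ else ⟨l + i.val - 1, by have := i.isLt; omega⟩
      with hg
    have gval : ∀ i, (g i).val = 1 ∨ l ≤ (g i).val := by
      intro i
      simp only [hg]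
      split_ifs <;> simp <;> omega
    have ginj : Function.Injective g := by
      intro i j hij
      have hij' := congrArg Fin.val hij
      simp only [hg] at hij'
      have hi1 := i.isLt
      have hj1 := j.isLt
      split_ifs at hij' <;> simp only [Fin.val_mk] at hij' <;> (apply Fin.ext; omega)
    have hadj : ∀ i, (Dandelion n l).Adj c (g i) := fun i =>
      dand_adj_center hl c (g i) rfl (gval i)
    have hmaps : ∀ i ∈ (Finset.univ : Finset (Fin (n - l + 1))),
        φ (g i) ∈ Finset.Icc 1 m := by
      intro i _
      obtain ⟨h1, h2⟩ := hb (g i)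
      exact Finset.mem_Icc.2 ⟨h1, h2⟩
    have hinj : Set.InjOn (fun i => φ (g i)) (Finset.univ : Finset (Fin (n - l + 1))) := by
      intro i _ j _ hφ
      by_contra hij
      have hgij : g i ≠ g j := fun e => hij (ginj e)
      have hs : s(c, g i) ≠ s(c, g j) := by
        intro heq
        rcases Sym2.eq_iff.1 heq with ⟨_, h2⟩ | ⟨h1, _⟩
        · exact hgij h2
        · have := gval j
          apply_fun Fin.val at h1
          simp only [hc] at h1
          omega
      exact hi c (g i) c (g j) (hadj i) (hadj j) hs (congrArg (HAdd.hAdd (φ c)) hφ)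
    have hcard := Finset.card_le_card_of_injOn (fun i => φ (g i)) hmaps hinj
    simpa using hcard
  exact le_antisymm (Nat.sInf_le hmem) (le_csInf ⟨_, hmem⟩ hlow)
end

section
/- The labeling φ on D(n,l) (with n-l+1 ≥ ⌈n/2⌉, case Δ > ⌈(|E|+1)/2⌉) defined by φ(x_i)=i for 1 ≤ i ≤ n-l, φ(p_0)=1, φ(p_1)=n-l+1, and suitable labels φ(p_j) ≤ n-l+1 for j ≥ 2, gives pairwise distinct edge weights: the star edges p_0x_i get weights i+1 ∈ {2,...,n-l+1}, and the path edges get distinct weights in {n-l+2,...,2n-2l+2}. -/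
/-!
Every edge of `D(n,l)` is `{dandelionParent l b, b}` for its larger end `b > 0`, so the labeling is
edge irregular as soon as the weight of that edge is injective in `b`. With `m = n - l + 1`, the
star edges get weights `2, …, m` and `p_0p_1` gets `m + 1`; since the path labels run
`m, m, m - 1, m - 1, …`, the remaining path edges get `2m, 2m - 1, …, 2m - l + 3`, which exceed
`m + 1` because `l ≤ m + 1`.
-/

def dandelionParent (l b : ℕ) : ℕ :=
  if l ≤ b then 0 else b - 1

lemma dandelionParent_lt {l b : ℕ} (hb : 0 < b) : dandelionParent l b < b := by
  unfold dandelionParent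
  split_ifs <;> omega

namespace Dandelion

variable {n l : ℕ}

lemma adj_iff {u v : Fin n} :
    (Dandelion n l).Adj u v ↔
      (0 < v.val ∧ u.val = dandelionParent l v.val) ∨
        (0 < u.val ∧ v.val = dandelionParent l u.val) := by
  rw [Dandelion, SimpleGraph.fromRel_adj, ne_eq, Fin.ext_iff]
  unfold dandelionParent
  split_ifs <;> omega

lemma max_pos_of_adj {u v : Fin n} (h : (Dandelion n l).Adj u v) : 0 < max u.val v.val := by
  rw [adj_iff] at h
  omega

lemma min_eq_dandelionParent_max_of_adj {u v : Fin n} (h : (Dandelion n l).Adj u v) :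
    min u.val v.val = dandelionParent l (max u.val v.val) := by
  rcases adj_iff.mp h with ⟨hv, hu⟩ | ⟨hu, hv⟩
  · have := dandelionParent_lt (l := l) hv
    rw [min_eq_left (by omega), max_eq_right (by omega), hu]
  · have := dandelionParent_lt (l := l) hu
    rw [min_eq_right (by omega), max_eq_left (by omega), hv]

lemma sym2_eq_of_adj_of_max_eq {u v x y : Fin n} (huv : (Dandelion n l).Adj u v)
    (hxy : (Dandelion n l).Adj x y) (hmax : max u.val v.val = max x.val y.val) :
    s(u, v) = s(x, y) := by
  have hmin := min_eq_dandelionParent_max_of_adj huv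
  rw [hmax, ← min_eq_dandelionParent_max_of_adj hxy] at hmin
  rw [Sym2.eq_iff, Fin.ext_iff, Fin.ext_iff, Fin.ext_iff, Fin.ext_iff]
  omega

end Dandelion

def dandelionLabel (m l j : ℕ) : ℕ :=
  if l ≤ j then j - l + 1 else if j = 0 then 1 else m - (j - 1) / 2

def dandelionWeight (m l b : ℕ) : ℕ :=
  dandelionLabel m l (dandelionParent l b) + dandelionLabel m l b

section Labeling

variable {m l : ℕ}

lemma dandelionLabel_of_le {j : ℕ} (h : l ≤ j) : dandelionLabel m l j = j - l + 1 := by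
  simp [dandelionLabel, h]

lemma dandelionLabel_zero : dandelionLabel m l 0 = 1 := by
  unfold dandelionLabel
  split_ifs <;> omega

lemma dandelionLabel_of_pos_of_lt {j : ℕ} (h0 : 0 < j) (hj : j < l) :
    dandelionLabel m l j = m - (j - 1) / 2 := by
  unfold dandelionLabel
  split_ifs <;> omega

lemma dandelionLabel_mem_Icc (hlm : l ≤ m + 1) {j : ℕ} (hj : j < l + m - 1) :
    dandelionLabel m l j ∈ Set.Icc 1 m := by
  unfold dandelionLabel
  split_ifs <;> simp only [Set.mem_Icc] <;> omega

lemma dandelionWeight_cases (hlm : l ≤ m + 1) {b : ℕ} (hb : 0 < b) :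
    (l ≤ b ∧ dandelionWeight m l b = b - l + 2) ∨
      (b = 1 ∧ b < l ∧ dandelionWeight m l b = m + 1) ∨
      (2 ≤ b ∧ b < l ∧ dandelionWeight m l b = 2 * m + 2 - b) := by
  unfold dandelionWeight dandelionParent
  by_cases hlb : l ≤ b
  · rw [if_pos hlb, dandelionLabel_zero, dandelionLabel_of_le hlb]
    omega
  rw [if_neg hlb, dandelionLabel_of_pos_of_lt hb (by omega)]
  obtain rfl | hb2 : b = 1 ∨ 2 ≤ b := by omega
  · rw [dandelionLabel_zero]
    omega
  · rw [dandelionLabel_of_pos_of_lt (by omega) (by omega)]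
    omega

lemma dandelionWeight_injOn (hlm : l ≤ m + 1) :
    Set.InjOn (dandelionWeight m l) (Set.Ioo 0 (l + m - 1)) := by
  rintro b ⟨hb0, hb⟩ c ⟨hc0, hc⟩ hbc
  have := dandelionWeight_cases hlm hb0
  have := dandelionWeight_cases hlm hc0
  omega

lemma dandelionWeight_mem_Icc_of_lt (hlm : l ≤ m + 1) {b : ℕ} (hb0 : 0 < b) (hb : b < l) :
    dandelionWeight m l b ∈ Set.Icc (m + 1) (2 * m) := by
  have := dandelionWeight_cases hlm hb0
  simp only [Set.mem_Icc]
  omega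

end Labeling

lemma Dandelion.label_add_label_of_adj {n l m : ℕ} {u v : Fin n} (h : (Dandelion n l).Adj u v) :
    dandelionLabel m l u.val + dandelionLabel m l v.val =
      dandelionWeight m l (max u.val v.val) := by
  rw [dandelionWeight, ← Dandelion.min_eq_dandelionParent_max_of_adj h]
  rcases le_total u.val v.val with huv | huv
  · rw [min_eq_left huv, max_eq_right huv]
  · rw [min_eq_right huv, max_eq_left huv, add_comm]

/-- In the case `Δ(D(n,l)) > ⌈(|E|+1)/2⌉`, there is an edge irregular
`(n-l+1)`-labeling `φ` with `φ(x_i) = i`, `φ(p_0) = 1`, `φ(p_1) = n-l+1`, and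
`φ(p_j) ≤ n-l+1` for `2 ≤ j ≤ l-1`; the star edges `p_0 x_i` get the weights
`i+1 ∈ {2,…,n-l+1}`, and the path edges get (pairwise distinct) weights in
`{n-l+2,…,2n-2l+2}`.  (Here `p_j` is vertex `j` and `x_i` is vertex `l+i-1`.) -/
theorem stmt_14 (n l : ℕ) (hl : 2 ≤ l) (hn : l < n) (h : n - l + 1 > (n + 1) / 2) :
    ∃ φ : Fin n → ℕ,
      (∀ v : Fin n, l ≤ v.val → φ v = v.val - l + 1) ∧
      (∀ v : Fin n, v.val = 0 → φ v = 1) ∧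
      (∀ v : Fin n, v.val = 1 → φ v = n - l + 1) ∧
      (∀ v : Fin n, 2 ≤ v.val → v.val ≤ l - 1 → φ v ≤ n - l + 1) ∧
      IsEdgeIrregular (Dandelion n l) (n - l + 1) φ ∧
      (∀ u v : Fin n, u.val < l → v.val < l → (Dandelion n l).Adj u v →
        n - l + 2 ≤ φ u + φ v ∧ φ u + φ v ≤ 2 * n - 2 * l + 2) := by
  have hlm : l ≤ n - l + 1 + 1 := by omega
  have hlt : ∀ v : Fin n, v.val < l + (n - l + 1) - 1 := fun v => by omega
  refine ⟨fun v => dandelionLabel (n - l + 1) l v.val, fun v => dandelionLabel_of_le,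
    fun v hv => by simp only [hv, dandelionLabel_zero], fun v hv => ?_,
    fun v _ _ => (dandelionLabel_mem_Icc hlm (hlt v)).2,
    ⟨fun v => dandelionLabel_mem_Icc hlm (hlt v), ?_⟩, ?_⟩
  · simp only [hv, dandelionLabel_of_pos_of_lt one_pos hl, Nat.sub_self, Nat.zero_div, Nat.sub_zero]
  · intro u v x y huv hxy hne hsum
    refine hne (Dandelion.sym2_eq_of_adj_of_max_eq huv hxy (dandelionWeight_injOn hlm ?_ ?_ ?_))
    · exact ⟨Dandelion.max_pos_of_adj huv, max_lt (hlt u) (hlt v)⟩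
    · exact ⟨Dandelion.max_pos_of_adj hxy, max_lt (hlt x) (hlt y)⟩
    · rwa [← Dandelion.label_add_label_of_adj huv, ← Dandelion.label_add_label_of_adj hxy]
  · intro u v hu hv huv
    have := dandelionWeight_mem_Icc_of_lt hlm (Dandelion.max_pos_of_adj huv) (max_lt hu hv)
    rw [← Dandelion.label_add_label_of_adj huv, Set.mem_Icc] at this
    dsimp only
    omega
end

section
/- For the Dandelion graph D(n,l) with n-l+1 < ⌈n/2⌉, the labeling φ(x_i)=i for 1 ≤ i ≤ n-l, φ(p_0)=1, and φ(p_i)=n-l+⌈i/2⌉ for 1 ≤ i ≤ l-1 is an edge irregular (n-l+⌈(l-1)/2⌉)-labeling: star edge weights are 2,...,n-l+1, and path edge weights are n-l+2 and 2(n-l)+i+1 for i = 1,...,l-2, all pairwise distinct. -/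
private lemma dandelion_key (n l : ℕ) (hl : 2 ≤ l) (hn : l < n)
    (φ : Fin n → ℕ)
    (hφ : ∀ v : Fin n, φ v =
      if v.val = 0 then 1
      else if v.val < l then n - l + (v.val + 1) / 2
      else v.val - l + 1)
    (a b c d : Fin n)
    (hab : (a.val = 0 ∧ l ≤ b.val) ∨ (a.val + 1 = b.val ∧ b.val ≤ l - 1))
    (hcd : (c.val = 0 ∧ l ≤ d.val) ∨ (c.val + 1 = d.val ∧ d.val ≤ l - 1))
    (hsum : φ a + φ b = φ c + φ d) : a = c ∧ b = d := by
  have ha := a.isLt; have hb := b.isLt; have hc := c.isLt; have hd := d.isLt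
  rw [hφ a, hφ b, hφ c, hφ d] at hsum
  refine ⟨Fin.ext ?_, Fin.ext ?_⟩ <;>
    · revert hsum
      split_ifs <;> omega

/-- In the case `n - l + 1 < ⌈n/2⌉`, the labeling `φ(x_i) = i`, `φ(p_0) = 1`,
`φ(p_i) = n - l + ⌈i/2⌉` for `1 ≤ i ≤ l-1` is an edge irregular
`(n-l+⌈(l-1)/2⌉)`-labeling; the star edge weights are `2,…,n-l+1`, the path edge
`p_0 p_1` has weight `n-l+2`, and the path edge `p_i p_{i+1}` has weight
`2(n-l)+i+1` for `1 ≤ i ≤ l-2`.  (Here `p_j` is vertex `j`, `x_i` is vertex `l+i-1`.) -/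
theorem stmt_15 (n l : ℕ) (hl : 2 ≤ l) (hn : l < n) (h : n - l + 1 < (n + 1) / 2)
    (φ : Fin n → ℕ)
    (hφ : ∀ v : Fin n, φ v =
      if v.val = 0 then 1
      else if v.val < l then n - l + (v.val + 1) / 2
      else v.val - l + 1) :
    IsEdgeIrregular (Dandelion n l) (n - l + l / 2) φ ∧
      (∀ v : Fin n, l ≤ v.val → φ ⟨0, by omega⟩ + φ v = v.val - l + 2) ∧
      (φ ⟨0, by omega⟩ + φ ⟨1, by omega⟩ = n - l + 2) ∧
      (∀ i : ℕ, ∀ _hi1 : 1 ≤ i, ∀ _hi2 : i ≤ l - 2,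
        φ ⟨i, by omega⟩ + φ ⟨i + 1, by omega⟩ = 2 * (n - l) + i + 1) := by
  have key := dandelion_key n l hl hn φ hφ
  refine ⟨⟨?_, ?_⟩, ?_, ?_, ?_⟩
  · intro v
    have hv := v.isLt
    rw [hφ v]
    split_ifs <;> omega
  · intro u v x y huv hxy hne hsum
    rw [Dandelion, SimpleGraph.fromRel_adj] at huv hxy
    rcases huv.2 with h1 | h1 <;> rcases hxy.2 with h2 | h2
    · obtain ⟨rfl, rfl⟩ := key u v x y h1 h2 hsum
      exact hne rfl
    · obtain ⟨rfl, rfl⟩ := key u v y x h1 h2 (by omega)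
      exact hne (Sym2.eq_swap)
    · obtain ⟨rfl, rfl⟩ := key v u x y h1 h2 (by omega)
      exact hne (Sym2.eq_swap)
    · obtain ⟨rfl, rfl⟩ := key v u y x h1 h2 (by omega)
      exact hne rfl
  · intro v hv
    have hv' := v.isLt
    rw [hφ v, hφ ⟨0, by omega⟩]
    simp only [Fin.val_mk]
    split_ifs <;> first | contradiction | exact absurd trivial (by assumption) | omega
  · rw [hφ ⟨0, by omega⟩, hφ ⟨1, by omega⟩]
    simp only [Fin.val_mk]
    split_ifs <;> first | contradiction | exact absurd trivial (by assumption) | omega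
  · intro i hi1 hi2
    rw [hφ ⟨i, by omega⟩, hφ ⟨i + 1, by omega⟩]
    simp only [Fin.val_mk]
    split_ifs <;> first | contradiction | exact absurd trivial (by assumption) | omega
end
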